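/- Let E be a Polish space with a σ-finite Borel measure μ. Then the space L^∞(E,μ) equipped with the topology C(L^∞,L^1) is complete; that is, L^∞(E,μ) is complete for the uniform structure induced by the family of seminorms p_K(F) = sup_{g∈K} |∫_E F g dμ|, K ranging over the norm-compact subsets of L^1(E,μ) (every Cauchy filter/net for this uniformity converges in L^∞(E,μ) with respect to C(L^∞,L^1)). -/

import Mathlib

open MeasureTheory Filter Topology Set

/-- The seminorm `p_K(F) = sup_{g ∈ K} |∫ F g dμ|` generating the topology
`C(L^∞, L^1)` of uniform convergence on (norm-compact) subsets `K` of `L^1`. -/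
noncomputable def pK {α : Type*} [MeasurableSpace α] (μ : Measure α)
    (K : Set (Lp ℝ 1 μ)) (F : Lp ℝ ⊤ μ) : ℝ :=
  ⨆ g ∈ K, |∫ x, F x * g x ∂μ|

/-!
Along `ℱ` the functionals `u ↦ ∫ F u dμ` on `L¹(μ)` are uniformly Cauchy on compact sets, so
they converge, uniformly on compact sets, to a linear functional `φ`; `φ` is continuous because
a convergent sequence together with its limit is compact and uniform limits of continuous maps
are continuous. It remains to represent `φ` by some `F₀ ∈ L^∞(μ)`. For a finite measure, Riesz
representation in `L²` gives `G` with `∫_s G = φ(1_s)`, hence `|G| ≤ ‖φ‖` a.e., and `u ↦ ∫ G u`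
agrees with `φ` on simple functions, which are dense in `L¹`. A σ-finite `μ` has an integrable
density `h > 0`, and `f ↦ h f` is an isometry of `L¹(h μ)` onto `L¹(μ)`, reducing to the finite
case.
-/

open scoped ENNReal NNReal

theorem ContinuousLinearMap.exists_tendstoUniformlyOn_of_uniformCauchySeqOn
    {ι 𝕜 V W : Type*} [NormedField 𝕜] [AddCommGroup V] [Module 𝕜 V] [TopologicalSpace V]
    [SequentialSpace V] [NormedAddCommGroup W] [NormedSpace 𝕜 W] [CompleteSpace W]
    {ℱ : Filter ι} [ℱ.NeBot] (T : ι → V →L[𝕜] W)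
    (hT : ∀ K, IsCompact K → UniformCauchySeqOn (fun i ↦ ⇑(T i)) ℱ K) :
    ∃ φ : V →L[𝕜] W, ∀ K, IsCompact K → TendstoUniformlyOn (fun i ↦ ⇑(T i)) φ ℱ K := by
  have hlim (v : V) : ∃ w, Tendsto (fun i ↦ T i v) ℱ (𝓝 w) :=
    CompleteSpace.complete ((hT {v} isCompact_singleton).cauchy_map rfl)
  choose φ hφ using hlim
  have hunif (K : Set V) (hK : IsCompact K) : TendstoUniformlyOn (fun i ↦ ⇑(T i)) φ ℱ K :=
    (hT K hK).tendstoUniformlyOn_of_tendsto fun v _ ↦ hφ v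
  let φₗ : V →ₗ[𝕜] W :=
    { toFun := φ
      map_add' := fun u v ↦
        tendsto_nhds_unique (hφ (u + v)) (by simpa using (hφ u).add (hφ v))
      map_smul' := fun a v ↦
        tendsto_nhds_unique (hφ (a • v)) (by simpa using (hφ v).const_smul a) }
  refine ⟨⟨φₗ, continuous_iff_seqContinuous.2 fun xs x hxs ↦ ?_⟩, hunif⟩
  have hK := hxs.isCompact_insert_range
  have hφK : ContinuousOn φ (insert x (range xs)) := (hunif _ hK).continuousOn
    (Frequently.of_forall fun i ↦ (T i).continuous.continuousOn)
  exact (hφK x (mem_insert _ _)).tendsto.comp (tendsto_nhdsWithin_iff.2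
    ⟨hxs, Eventually.of_forall fun n ↦ mem_insert_of_mem _ ⟨n, rfl⟩⟩)

section Pairing
variable {α : Type*} [MeasurableSpace α] {μ : Measure α}

noncomputable def linftyPairing (μ : Measure α) : Lp ℝ ⊤ μ →L[ℝ] Lp ℝ 1 μ →L[ℝ] ℝ :=
  (ContinuousLinearMap.mul ℝ ℝ).lpPairing μ ⊤ 1

lemma linftyPairing_apply (F : Lp ℝ ⊤ μ) (u : Lp ℝ 1 μ) :
    linftyPairing μ F u = ∫ x, F x * u x ∂μ :=
  (ContinuousLinearMap.mul ℝ ℝ).lpPairing_eq_integral F u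

lemma linftyPairing_indicatorConstLp (F : Lp ℝ ⊤ μ) {s : Set α} (hs : MeasurableSet s)
    (hμs : μ s ≠ ∞) (c : ℝ) :
    linftyPairing μ F (indicatorConstLp 1 hs hμs c) = ∫ x in s, c * F x ∂μ := by
  rw [linftyPairing_apply, ← integral_indicator hs]
  refine integral_congr_ae ?_
  filter_upwards [indicatorConstLp_coeFn (p := 1) (hs := hs) (hμs := hμs) (c := c)] with x hx
  by_cases hxs : x ∈ s <;> simp [hx, hxs, mul_comm]

lemma pK_eq (K : Set (Lp ℝ 1 μ)) (F : Lp ℝ ⊤ μ) :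
    pK μ K F = ⨆ u ∈ K, |linftyPairing μ F u| := by
  simp only [pK, linftyPairing_apply]

lemma abs_linftyPairing_le_pK {K : Set (Lp ℝ 1 μ)} (hK : IsCompact K) {u : Lp ℝ 1 μ}
    (hu : u ∈ K) (F : Lp ℝ ⊤ μ) : |linftyPairing μ F u| ≤ pK μ K F := by
  rw [pK_eq]
  refine le_ciSup₂ (f := fun u (_ : u ∈ K) ↦ |linftyPairing μ F u|) ?_ u hu
  refine (hK.image (continuous_abs.comp (linftyPairing μ F).continuous)).bddAbove.mono ?_
  simp only [iUnion_subset_iff, range_subset_iff]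
  exact fun v hv ↦ mem_image_of_mem _ hv

lemma pK_le {K : Set (Lp ℝ 1 μ)} {F : Lp ℝ ⊤ μ} {c : ℝ} (hc : 0 ≤ c)
    (h : ∀ u ∈ K, |linftyPairing μ F u| ≤ c) : pK μ K F ≤ c := by
  rw [pK_eq]
  exact Real.iSup_le (fun u ↦ Real.iSup_le (h u) hc) hc

end Pairing

section FiniteMeasure
variable {α : Type*} [MeasurableSpace α] {ν : Measure α} [IsFiniteMeasure ν]

lemma exists_integrable_setIntegral_eq_indicatorConstLp (φ : Lp ℝ 1 ν →L[ℝ] ℝ) :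
    ∃ G : α → ℝ, Integrable G ν ∧ ∀ (c : ℝ) {s : Set α} (hs : MeasurableSet s),
      ∫ x in s, c * G x ∂ν = φ (indicatorConstLp 1 hs (measure_ne_top ν s) c) := by
  -- the inclusion `L²(ν) ⊆ L¹(ν)`, as Hölder multiplication by `1 ∈ L²(ν)`
  let ι : Lp ℝ 2 ν →L[ℝ] Lp ℝ 1 ν := (ContinuousLinearMap.mul ℝ ℝ).holderL ν 2 2 1
    (Lp.const 2 ν 1)
  have hι {s : Set α} (hs : MeasurableSet s) (c : ℝ) :
      ι (indicatorConstLp 2 hs (measure_ne_top ν s) c) =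
        indicatorConstLp 1 hs (measure_ne_top ν s) c := by
    refine Lp.ext ?_
    filter_upwards [(ContinuousLinearMap.mul ℝ ℝ).coeFn_holder (r := 1)
        (Lp.const 2 ν 1) (indicatorConstLp 2 hs (measure_ne_top ν s) c),
      Lp.coeFn_const (p := 2) (μ := ν) (1 : ℝ),
      indicatorConstLp_coeFn (p := 2) (hs := hs) (hμs := measure_ne_top ν s) (c := c),
      indicatorConstLp_coeFn (p := 1) (hs := hs) (hμs := measure_ne_top ν s) (c := c)]
      with x h1 h2 h3 h4
    refine h1.trans ?_
    rw [h2, h3, h4]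
    simp
  set G := (InnerProductSpace.toDual ℝ (Lp ℝ 2 ν)).symm (φ ∘L ι)
  refine ⟨G, memLp_one_iff_integrable.1 ((Lp.memLp G).mono_exponent one_le_two), fun c s hs ↦ ?_⟩
  rw [← hι hs, ← ContinuousLinearMap.comp_apply, ← InnerProductSpace.toDual_symm_apply,
    real_inner_comm, L2.inner_indicatorConstLp_eq_setIntegral_inner]
  simp [G, mul_comm]

lemma ae_abs_le_of_abs_setIntegral_le {G : α → ℝ} (hG : Integrable G ν) {C : ℝ}
    (hC : ∀ s, MeasurableSet s → |∫ x in s, G x ∂ν| ≤ C * ν.real s) : ∀ᵐ x ∂ν, |G x| ≤ C := by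
  have hle {F : α → ℝ} (hF : Integrable F ν)
      (hFC : ∀ s, MeasurableSet s → ∫ x in s, F x ∂ν ≤ C * ν.real s) :
      ∀ᵐ x ∂ν, F x ≤ C :=
    ae_le_of_forall_setIntegral_le hF (integrable_const C) fun s hs _ ↦ by
      simpa [setIntegral_const, mul_comm] using hFC s hs
  filter_upwards [hle hG fun s hs ↦ (le_abs_self _).trans (hC s hs),
    hle hG.neg fun s hs ↦ by simpa [integral_neg] using (neg_le_abs _).trans (hC s hs)]
    with x hx hx'
  exact abs_le.2 ⟨by linarith [show -G x ≤ C from hx'], hx⟩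

theorem linftyPairing_surjective_of_isFiniteMeasure : Function.Surjective (linftyPairing ν) := by
  intro φ
  obtain ⟨G, hG, hGφ⟩ := exists_integrable_setIntegral_eq_indicatorConstLp φ
  have hbound : ∀ᵐ x ∂ν, |G x| ≤ ‖φ‖ := ae_abs_le_of_abs_setIntegral_le hG fun s hs ↦ by
    simpa [← hGφ 1 hs, norm_indicatorConstLp] using
      φ.le_opNorm (indicatorConstLp 1 hs (measure_ne_top ν s) 1)
  have hG_top : MemLp G ⊤ ν := memLp_top_of_bound hG.aestronglyMeasurable _ hbound
  refine ⟨hG_top.toLp G, ContinuousLinearMap.ext fun u ↦ ?_⟩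
  induction u using Lp.induction ENNReal.one_ne_top with
  | indicatorConst c hs hμs =>
    rw [Lp.simpleFunc.coe_indicatorConst, linftyPairing_indicatorConstLp, ← hGφ c hs]
    exact setIntegral_congr_ae hs (by filter_upwards [hG_top.coeFn_toLp] with x hx _; rw [hx])
  | add _ _ _ hf hg => rw [map_add, map_add, hf, hg]
  | isClosed => exact isClosed_eq (ContinuousLinearMap.continuous _) φ.continuous

end FiniteMeasure

section WithDensity
variable {α : Type*} [MeasurableSpace α] (μ : Measure α) {h : α → ℝ≥0}

lemma integrable_mul_withDensity (hh : Measurable h) (f : Lp ℝ 1 (μ.withDensity fun x ↦ h x)) :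
    Integrable (fun x ↦ (h x : ℝ) * f x) μ :=
  (integrable_withDensity_iff_integrable_smul hh).1 (L1.integrable_coeFn f)

variable (hh : Measurable h)

noncomputable def withDensityMulL1 :
    Lp ℝ 1 (μ.withDensity fun x ↦ h x) →ₗᵢ[ℝ] Lp ℝ 1 μ where
  toFun f := (integrable_mul_withDensity μ hh f).toL1 _
  map_add' f g := by
    rw [← Integrable.toL1_add, Integrable.toL1_eq_toL1_iff]
    filter_upwards [(ae_withDensity_iff hh.coe_nnreal_ennreal).1 (Lp.coeFn_add f g)] with x hx
    rcases eq_or_ne (h x) 0 with h0 | h0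
    · simp [h0]
    · simp only [Pi.add_apply]
      rw [hx (by exact_mod_cast h0), Pi.add_apply, mul_add]
  map_smul' c f := by
    rw [RingHom.id_apply, ← Integrable.toL1_smul', Integrable.toL1_eq_toL1_iff]
    filter_upwards [(ae_withDensity_iff hh.coe_nnreal_ennreal).1 (Lp.coeFn_smul c f)] with x hx
    rcases eq_or_ne (h x) 0 with h0 | h0
    · simp [h0]
    · simp only [Pi.smul_apply]
      rw [hx (by exact_mod_cast h0), Pi.smul_apply, smul_eq_mul, smul_eq_mul, mul_left_comm]
  norm_map' f := by
    change ‖(integrable_mul_withDensity μ hh f).toL1 _‖ = ‖f‖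
    rw [L1.norm_of_fun_eq_integral_norm, L1.norm_eq_integral_norm,
      integral_withDensity_eq_integral_smul hh]
    simp [NNReal.smul_def]

lemma coeFn_withDensityMulL1 (f : Lp ℝ 1 (μ.withDensity fun x ↦ h x)) :
    withDensityMulL1 μ hh f =ᵐ[μ] fun x ↦ (h x : ℝ) * f x :=
  (integrable_mul_withDensity μ hh f).coeFn_toL1

lemma withDensityMulL1_surjective (hpos : ∀ x, 0 < h x) :
    Function.Surjective (withDensityMulL1 μ hh) := by
  intro u
  have hv : Integrable (fun x ↦ u x / h x) (μ.withDensity fun x ↦ h x) :=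
    (integrable_withDensity_iff_integrable_smul hh).2 <| (L1.integrable_coeFn u).congr <|
      Eventually.of_forall fun x ↦ by
        simp [NNReal.smul_def, mul_div_cancel₀ _ (NNReal.coe_ne_zero.2 (hpos x).ne')]
  refine ⟨hv.toL1 _, Lp.ext ?_⟩
  filter_upwards [coeFn_withDensityMulL1 μ hh (hv.toL1 _),
    (ae_withDensity_iff hh.coe_nnreal_ennreal).1 hv.coeFn_toL1] with x hx hx'
  rw [hx, hx' (by simpa using (hpos x).ne'), mul_div_cancel₀ _ (by simpa using (hpos x).ne')]

end WithDensity

theorem linftyPairing_surjective {α : Type*} [MeasurableSpace α] (μ : Measure α)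
    [SigmaFinite μ] :
    Function.Surjective (linftyPairing μ) := by
  intro φ
  obtain ⟨h, hpos, hh, hint⟩ := exists_pos_lintegral_lt_of_sigmaFinite μ one_ne_zero
  set ν := μ.withDensity fun x ↦ (h x : ℝ≥0∞)
  have : IsFiniteMeasure ν := isFiniteMeasure_withDensity (hint.trans ENNReal.one_lt_top).ne
  set M := withDensityMulL1 μ hh
  obtain ⟨G, hG⟩ := linftyPairing_surjective_of_isFiniteMeasure (φ ∘L M.toContinuousLinearMap)
  have hμν : μ ≪ ν := withDensity_absolutelyContinuous' hh.coe_nnreal_ennreal.aemeasurable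
    (Eventually.of_forall fun x ↦ by simpa using (hpos x).ne')
  have hG_top : MemLp G ⊤ μ := ⟨(Lp.aestronglyMeasurable G).mono_ac hμν,
    (eLpNormEssSup_mono_measure _ hμν).trans_lt (Lp.memLp G).eLpNorm_lt_top⟩
  refine ⟨hG_top.toLp G, ContinuousLinearMap.ext fun u ↦ ?_⟩
  obtain ⟨v, rfl⟩ := withDensityMulL1_surjective μ hh hpos u
  calc linftyPairing μ (hG_top.toLp G) (M v) = linftyPairing ν G v := by
        rw [linftyPairing_apply, linftyPairing_apply, integral_withDensity_eq_integral_smul hh]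
        refine integral_congr_ae ?_
        filter_upwards [hG_top.coeFn_toLp, coeFn_withDensityMulL1 μ hh v] with x hx hx'
        rw [hx, hx', NNReal.smul_def, smul_eq_mul]
        ring
    _ = φ (M v) := by rw [hG]; rfl

theorem Linfty_complete_for_CLinftyL1_general
    {E : Type*} [MeasurableSpace E]
    (μ : Measure E) [SigmaFinite μ]
    (ℱ : Filter (Lp ℝ ⊤ μ)) [ℱ.NeBot]
    (hcauchy : ∀ K : Set (Lp ℝ 1 μ), IsCompact K → ∀ ε : ℝ, 0 < ε →
      ∃ A ∈ ℱ, ∀ F ∈ A, ∀ G ∈ A, pK μ K (F - G) < ε) :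
    ∃ F₀ : Lp ℝ ⊤ μ, ∀ K : Set (Lp ℝ 1 μ), IsCompact K → ∀ ε : ℝ, 0 < ε →
      ∃ A ∈ ℱ, ∀ F ∈ A, pK μ K (F - F₀) < ε := by
  have hunif (K : Set (Lp ℝ 1 μ)) (hK : IsCompact K) :
      UniformCauchySeqOn (fun F ↦ ⇑(linftyPairing μ F)) ℱ K := by
    intro U hU
    obtain ⟨ε, hε, hεU⟩ := Metric.mem_uniformity_dist.1 hU
    obtain ⟨A, hA, hAε⟩ := hcauchy K hK ε hε
    filter_upwards [prod_mem_prod hA hA] with ⟨F, G⟩ ⟨hF, hG⟩ u hu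
    refine hεU ?_
    rw [Real.dist_eq, ← sub_apply, ← map_sub]
    exact (abs_linftyPairing_le_pK hK hu _).trans_lt (hAε F hF G hG)
  obtain ⟨φ, hφ⟩ := ContinuousLinearMap.exists_tendstoUniformlyOn_of_uniformCauchySeqOn _ hunif
  obtain ⟨F₀, rfl⟩ := linftyPairing_surjective μ φ
  refine ⟨F₀, fun K hK ε hε ↦ ⟨_, Metric.tendstoUniformlyOn_iff.1 (hφ K hK) _ (half_pos hε),
    fun F hF ↦ ?_⟩⟩
  refine (pK_le (half_pos hε).le fun u hu ↦ ?_).trans_lt (half_lt_self hε)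
  rw [map_sub, sub_apply, abs_sub_comm, ← Real.dist_eq]
  exact (hF u hu).le

/-- For a Polish space `E` with a σ-finite Borel measure `μ`, the space
`L^∞(E,μ)` equipped with the topology `C(L^∞,L^1)` is complete: every filter on
`L^∞(E,μ)` which is Cauchy for the uniformity induced by the family of seminorms
`p_K(F) = sup_{g∈K} |∫ F g dμ|` (`K` ranging over norm-compact subsets of `L^1(E,μ)`)
converges in `L^∞(E,μ)` with respect to these seminorms. -/
theorem Linfty_complete_for_CLinftyL1
    {E : Type*} [TopologicalSpace E] [PolishSpace E] [MeasurableSpace E] [BorelSpace E]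
    (μ : Measure E) [SigmaFinite μ]
    (ℱ : Filter (Lp ℝ ⊤ μ)) [ℱ.NeBot]
    (hcauchy : ∀ K : Set (Lp ℝ 1 μ), IsCompact K → ∀ ε : ℝ, 0 < ε →
      ∃ A ∈ ℱ, ∀ F ∈ A, ∀ G ∈ A, pK μ K (F - G) < ε) :
    ∃ F₀ : Lp ℝ ⊤ μ, ∀ K : Set (Lp ℝ 1 μ), IsCompact K → ∀ ε : ℝ, 0 < ε →
      ∃ A ∈ ℱ, ∀ F ∈ A, pK μ K (F - F₀) < ε :=
  Linfty_complete_for_CLinftyL1_general μ ℱ hcauchy
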